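/- The translation tr : SL → BSL has linear size: there is a constant c such that |tr(φ)| ≤ c·|φ| for all SL formulas φ. The translation tr_A : BSL → SL satisfies |tr_A(φ)| ≤ 2·|Ag|·|φ| for all BSL state formulas φ and all A ⊆ Ag, where |φ| is the number of symbols of φ. -/
import Mathlib


/-- A concurrent game structure: transition function, initial state, valuation. -/
structure CGS (S Ag Act AP : Type) where
  δ : S → (Ag → Act) → S
  init : S
  val : S → AP → Prop

variable {S Ag Act AP Var : Type}

/-- An initial (finite) path: a start state together with the list of decisions taken. -/
abbrev FPath (S Ag Act : Type) := S × List (Ag → Act)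

/-- Last state of an initial path. -/
def CGS.lastState (G : CGS S Ag Act AP) (ρ : FPath S Ag Act) : S :=
  ρ.2.foldl G.δ ρ.1

/-- A strategy assigns an action to every initial path. -/
abbrev Strat (S Ag Act : Type) := FPath S Ag Act → Act

/-- Concatenation of initial paths (meaningful when `G.lastState ρ = ρ'.1`,
i.e. they are glued at the shared state). -/
def FPath.concat (ρ ρ' : FPath S Ag Act) : FPath S Ag Act := (ρ.1, ρ.2 ++ ρ'.2)

/-- The finite prefix with `n` decisions of the play from `q` whose decision stream is `d`. -/
def prefixPath (q : S) (d : ℕ → Ag → Act) (n : ℕ) : FPath S Ag Act :=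
  (q, List.ofFn fun i : Fin n => d i)

/-- The state reached after `i` steps of the play from `q` with decision stream `d`. -/
def stateAt (G : CGS S Ag Act AP) (q : S) (d : ℕ → Ag → Act) (i : ℕ) : S :=
  G.lastState (prefixPath q d i)

/-- An assignment: a partial map from agents and variables to strategies. -/
abbrev Assign (S Ag Act Var : Type) := Ag ⊕ Var → Option (Strat S Ag Act)

/-- The outcome of an assignment from a state: the set of plays (identified with
their decision streams) compatible with all strategies assigned to agents. -/
def outcome (G : CGS S Ag Act AP) (q : S) (χ : Assign S Ag Act Var) :
    Set (ℕ → Ag → Act) :=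
  {d | ∀ (k : ℕ) (a : Ag) (σ : Strat S Ag Act),
      χ (Sum.inl a) = some σ → d k a = σ (prefixPath q d k)}

/-- The `ρ`-translation of a strategy. -/
def transStrat [DecidableEq S] (G : CGS S Ag Act AP) (ρ : FPath S Ag Act)
    (σ : Strat S Ag Act) : Strat S Ag Act :=
  fun ρ' => if ρ'.1 = G.lastState ρ then σ (ρ.concat ρ') else σ ρ'

/-- The `ρ`-translation of an assignment. -/
def transAssign [DecidableEq S] (G : CGS S Ag Act AP) (ρ : FPath S Ag Act)
    (χ : Assign S Ag Act Var) : Assign S Ag Act Var :=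
  fun l => (χ l).map (transStrat G ρ)

/-- Syntax of Strategy Logic (SL). -/
inductive SLForm (AP Ag Var : Type) : Type where
  | atom : AP → SLForm AP Ag Var
  | neg  : SLForm AP Ag Var → SLForm AP Ag Var
  | or   : SLForm AP Ag Var → SLForm AP Ag Var → SLForm AP Ag Var
  | next : SLForm AP Ag Var → SLForm AP Ag Var
  | untl : SLForm AP Ag Var → SLForm AP Ag Var → SLForm AP Ag Var
  | exi  : Var → SLForm AP Ag Var → SLForm AP Ag Var
  | bind : Ag → Var → SLForm AP Ag Var → SLForm AP Ag Var

mutual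
/-- State formulas of Branching-time Strategy Logic (BSL). -/
inductive BSLForm (AP Ag Var : Type) : Type where
  | atom : AP → BSLForm AP Ag Var
  | neg  : BSLForm AP Ag Var → BSLForm AP Ag Var
  | or   : BSLForm AP Ag Var → BSLForm AP Ag Var → BSLForm AP Ag Var
  | exi  : Var → BSLForm AP Ag Var → BSLForm AP Ag Var
  | bind : Ag → Var → BSLForm AP Ag Var → BSLForm AP Ag Var
  | unbind : Ag → BSLForm AP Ag Var → BSLForm AP Ag Var
  | pathE : BSLPath AP Ag Var → BSLForm AP Ag Var
/-- Path formulas of BSL. -/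
inductive BSLPath (AP Ag Var : Type) : Type where
  | state : BSLForm AP Ag Var → BSLPath AP Ag Var
  | neg   : BSLPath AP Ag Var → BSLPath AP Ag Var
  | or    : BSLPath AP Ag Var → BSLPath AP Ag Var → BSLPath AP Ag Var
  | next  : BSLPath AP Ag Var → BSLPath AP Ag Var
  | untl  : BSLPath AP Ag Var → BSLPath AP Ag Var → BSLPath AP Ag Var
end

/-- Semantics of SL. Temporal operators are evaluated on an outcome play of the
current assignment (for complete assignments — the only case where the SL
semantics is defined — this play is unique), with the assignment translated
along the play. -/
def SLsat [DecidableEq S] [DecidableEq Ag] [DecidableEq Var] (G : CGS S Ag Act AP) :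
    Assign S Ag Act Var → S → SLForm AP Ag Var → Prop
  | χ, q, .atom p => G.val q p
  | χ, q, .neg φ => ¬ SLsat G χ q φ
  | χ, q, .or φ φ' => SLsat G χ q φ ∨ SLsat G χ q φ'
  | χ, q, .exi x φ =>
      ∃ σ : Strat S Ag Act, SLsat G (Function.update χ (Sum.inr x) (some σ)) q φ
  | χ, q, .bind a x φ => SLsat G (Function.update χ (Sum.inl a) (χ (Sum.inr x))) q φ
  | χ, q, .next φ => ∃ d ∈ outcome G q χ,
      SLsat G (transAssign G (prefixPath q d 1) χ) (stateAt G q d 1) φ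
  | χ, q, .untl φ φ' => ∃ d ∈ outcome G q χ, ∃ j : ℕ,
      SLsat G (transAssign G (prefixPath q d j) χ) (stateAt G q d j) φ' ∧
      ∀ k < j, SLsat G (transAssign G (prefixPath q d k) χ) (stateAt G q d k) φ

mutual
/-- Semantics of BSL state formulas, at a state under an assignment. -/
def BSLsat [DecidableEq S] [DecidableEq Ag] [DecidableEq Var] (G : CGS S Ag Act AP)
    (χ : Assign S Ag Act Var) (q : S) : BSLForm AP Ag Var → Prop
  | .atom p => G.val q p
  | .neg φ => ¬ BSLsat G χ q φ
  | .or φ φ' => BSLsat G χ q φ ∨ BSLsat G χ q φ'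
  | .exi x φ =>
      ∃ σ : Strat S Ag Act, BSLsat G (Function.update χ (Sum.inr x) (some σ)) q φ
  | .bind a x φ => BSLsat G (Function.update χ (Sum.inl a) (χ (Sum.inr x))) q φ
  | .unbind a φ => BSLsat G (Function.update χ (Sum.inl a) none) q φ
  | .pathE ψ => ∃ d ∈ outcome G q χ, BSLsatP G χ q d 0 ψ

/-- Semantics of BSL path formulas, on the play from `q` with decision stream
`d`, at position `i`; the assignment is translated by the prefix as state
formulas are evaluated. -/
def BSLsatP [DecidableEq S] [DecidableEq Ag] [DecidableEq Var] (G : CGS S Ag Act AP)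
    (χ : Assign S Ag Act Var) (q : S) (d : ℕ → Ag → Act) (i : ℕ) :
    BSLPath AP Ag Var → Prop
  | .state φ => BSLsat G (transAssign G (prefixPath q d i) χ) (stateAt G q d i) φ
  | .neg ψ => ¬ BSLsatP G χ q d i ψ
  | .or ψ ψ' => BSLsatP G χ q d i ψ ∨ BSLsatP G χ q d i ψ'
  | .next ψ => BSLsatP G χ q d (i + 1) ψ
  | .untl ψ ψ' => ∃ j, i ≤ j ∧ BSLsatP G χ q d j ψ' ∧
      ∀ k, i ≤ k → k < j → BSLsatP G χ q d k ψ
end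

/-- Free variables of an SL formula. -/
def SLfree : SLForm AP Ag Var → Set Var
  | .atom _ => ∅
  | .neg φ => SLfree φ
  | .or φ φ' => SLfree φ ∪ SLfree φ'
  | .next φ => SLfree φ
  | .untl φ φ' => SLfree φ ∪ SLfree φ'
  | .exi x φ => SLfree φ \ {x}
  | .bind _ x φ => insert x (SLfree φ)

mutual
/-- Free variables of a BSL state formula. -/
def BSLfree : BSLForm AP Ag Var → Set Var
  | .atom _ => ∅
  | .neg φ => BSLfree φ
  | .or φ φ' => BSLfree φ ∪ BSLfree φ'
  | .exi x φ => BSLfree φ \ {x}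
  | .bind _ x φ => insert x (BSLfree φ)
  | .unbind _ φ => BSLfree φ
  | .pathE ψ => BSLfreeP ψ
/-- Free variables of a BSL path formula. -/
def BSLfreeP : BSLPath AP Ag Var → Set Var
  | .state φ => BSLfree φ
  | .neg ψ => BSLfreeP ψ
  | .or ψ ψ' => BSLfreeP ψ ∪ BSLfreeP ψ'
  | .next ψ => BSLfreeP ψ
  | .untl ψ ψ' => BSLfreeP ψ ∪ BSLfreeP ψ'
end

/-- `SLdefFor A φ` holds when the SL semantics of `φ` is defined in every
assignment whose agent-domain is `A`: every temporal operator is only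
evaluated under a complete assignment (every agent being bound on the way). -/
def SLdefFor (A : Set Ag) : SLForm AP Ag Var → Prop
  | .atom _ => True
  | .neg φ => SLdefFor A φ
  | .or φ φ' => SLdefFor A φ ∧ SLdefFor A φ'
  | .exi _ φ => SLdefFor A φ
  | .bind a _ φ => SLdefFor (insert a A) φ
  | .next φ => A = Set.univ ∧ SLdefFor A φ
  | .untl φ φ' => A = Set.univ ∧ SLdefFor A φ ∧ SLdefFor A φ'

/-- The translation `tr : SL → BSL`, inserting a path quantifier in front of
each temporal operator and homomorphic elsewhere. -/
def tr : SLForm AP Ag Var → BSLForm AP Ag Var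
  | .atom p => .atom p
  | .neg φ => .neg (tr φ)
  | .or φ φ' => .or (tr φ) (tr φ')
  | .next φ => .pathE (.next (.state (tr φ)))
  | .untl φ φ' => .pathE (.untl (.state (tr φ)) (.state (tr φ')))
  | .exi x φ => .exi x (tr φ)
  | .bind a x φ => .bind a x (tr φ)

mutual
/-- `φ` avoids the fresh variables (those of the form `Sum.inr a`) used by the
translation `tr_A`. -/
def BSLavoidsFresh : BSLForm AP Ag (Var ⊕ Ag) → Prop
  | .atom _ => True
  | .neg φ => BSLavoidsFresh φ
  | .or φ φ' => BSLavoidsFresh φ ∧ BSLavoidsFresh φ'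
  | .exi x φ => x.isLeft ∧ BSLavoidsFresh φ
  | .bind _ x φ => x.isLeft ∧ BSLavoidsFresh φ
  | .unbind _ φ => BSLavoidsFresh φ
  | .pathE ψ => BSLavoidsFreshP ψ
def BSLavoidsFreshP : BSLPath AP Ag (Var ⊕ Ag) → Prop
  | .state φ => BSLavoidsFresh φ
  | .neg ψ => BSLavoidsFreshP ψ
  | .or ψ ψ' => BSLavoidsFreshP ψ ∧ BSLavoidsFreshP ψ'
  | .next ψ => BSLavoidsFreshP ψ
  | .untl ψ ψ' => BSLavoidsFreshP ψ ∧ BSLavoidsFreshP ψ'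
end

/-- Prefix a formula with the bindings `(a, x_a)` for all agents `a` in `l`. -/
def bindList (l : List Ag) (φ : SLForm AP Ag (Var ⊕ Ag)) : SLForm AP Ag (Var ⊕ Ag) :=
  l.foldr (fun a ψ => .bind a (Sum.inr a) ψ) φ

/-- Prefix a formula with the strategy quantifications `⟨⟨x_a⟩⟩` for `a ∈ l`. -/
def quantList (l : List Ag) (φ : SLForm AP Ag (Var ⊕ Ag)) : SLForm AP Ag (Var ⊕ Ag) :=
  l.foldr (fun a ψ => .exi (Sum.inr a) ψ) φ

noncomputable section

mutual
/-- The translation `tr_A : BSL → SL`, parameterized by the set `A` of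
currently unbound agents; each fresh variable for agent `a` is `Sum.inr a`. -/
def trA [DecidableEq Ag] (A : Finset Ag) :
    BSLForm AP Ag (Var ⊕ Ag) → SLForm AP Ag (Var ⊕ Ag)
  | .atom p => .atom p
  | .neg φ => .neg (trA A φ)
  | .or φ φ' => .or (trA A φ) (trA A φ')
  | .exi x φ => .exi x (trA A φ)
  | .bind a x φ => .bind a x (trA (A.erase a) φ)
  | .unbind a φ => trA (insert a A) φ
  | .pathE ψ => quantList A.toList (bindList A.toList (trAP A ψ))
/-- The homomorphic extension of `tr_A` to BSL path formulas. -/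
def trAP [DecidableEq Ag] (A : Finset Ag) :
    BSLPath AP Ag (Var ⊕ Ag) → SLForm AP Ag (Var ⊕ Ag)
  | .state φ => trA A φ
  | .neg ψ => .neg (trAP A ψ)
  | .or ψ ψ' => .or (trAP A ψ) (trAP A ψ')
  | .next ψ => .next (trAP A ψ)
  | .untl ψ ψ' => .untl (trAP A ψ) (trAP A ψ')
end
end

/-- Number of symbols of an SL formula. -/
def SLsize : SLForm AP Ag Var → ℕ
  | .atom _ => 1
  | .neg φ => 1 + SLsize φ
  | .or φ φ' => 1 + SLsize φ + SLsize φ'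
  | .next φ => 1 + SLsize φ
  | .untl φ φ' => 1 + SLsize φ + SLsize φ'
  | .exi _ φ => 1 + SLsize φ
  | .bind _ _ φ => 1 + SLsize φ

mutual
/-- Number of symbols of a BSL state formula. -/
def BSLsize : BSLForm AP Ag Var → ℕ
  | .atom _ => 1
  | .neg φ => 1 + BSLsize φ
  | .or φ φ' => 1 + BSLsize φ + BSLsize φ'
  | .exi _ φ => 1 + BSLsize φ
  | .bind _ _ φ => 1 + BSLsize φ
  | .unbind _ φ => 1 + BSLsize φ
  | .pathE ψ => 1 + BSLsizeP ψ
/-- Number of symbols of a BSL path formula. -/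
def BSLsizeP : BSLPath AP Ag Var → ℕ
  | .state φ => BSLsize φ
  | .neg ψ => 1 + BSLsizeP ψ
  | .or ψ ψ' => 1 + BSLsizeP ψ + BSLsizeP ψ'
  | .next ψ => 1 + BSLsizeP ψ
  | .untl ψ ψ' => 1 + BSLsizeP ψ + BSLsizeP ψ'
end

lemma tr_size_le (φ : SLForm AP Ag Var) : BSLsize (tr φ) ≤ 2 * SLsize φ := by
  induction φ <;> simp only [tr, BSLsize, BSLsizeP, SLsize] <;> omega

lemma bindList_size (l : List Ag) (φ : SLForm AP Ag (Var ⊕ Ag)) :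
    SLsize (bindList l φ) = l.length + SLsize φ := by
  induction l with
  | nil => simp [bindList, quantList]
  | cons a l ih => simp [bindList, SLsize] at *; omega

lemma quantList_size (l : List Ag) (φ : SLForm AP Ag (Var ⊕ Ag)) :
    SLsize (quantList l φ) = l.length + SLsize φ := by
  induction l with
  | nil => simp [bindList, quantList]
  | cons a l ih => simp [quantList, SLsize] at *; omega

mutual
lemma trA_size [DecidableEq Ag] [Fintype Ag] [Nonempty Ag] (A : Finset Ag)
    (φ : BSLForm AP Ag (Var ⊕ Ag)) :
    SLsize (trA A φ) ≤ 2 * Fintype.card Ag * BSLsize φ := by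
  have hn : 1 ≤ Fintype.card Ag := Fintype.card_pos
  cases φ with
  | atom p => simp [trA, SLsize, BSLsize]; omega
  | neg φ =>
      have := trA_size A φ
      simp only [trA, SLsize, BSLsize]; nlinarith
  | or φ φ' =>
      have := trA_size A φ; have := trA_size A φ'
      simp only [trA, SLsize, BSLsize]; nlinarith
  | exi x φ =>
      have := trA_size A φ
      simp only [trA, SLsize, BSLsize]; nlinarith
  | bind a x φ =>
      have := trA_size (A.erase a) φ
      simp only [trA, SLsize, BSLsize]; nlinarith
  | unbind a φ =>
      have := trA_size (insert a A) φ
      simp only [trA, SLsize, BSLsize]; nlinarith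
  | pathE ψ =>
      have := trAP_size A ψ
      have hA : A.toList.length ≤ Fintype.card Ag := by
        rw [Finset.length_toList]
        exact Finset.card_le_card (Finset.subset_univ A)
      simp only [trA, SLsize, BSLsize, quantList_size, bindList_size]
      nlinarith
termination_by sizeOf φ
lemma trAP_size [DecidableEq Ag] [Fintype Ag] [Nonempty Ag] (A : Finset Ag)
    (ψ : BSLPath AP Ag (Var ⊕ Ag)) :
    SLsize (trAP A ψ) ≤ 2 * Fintype.card Ag * BSLsizeP ψ := by
  have hn : 1 ≤ Fintype.card Ag := Fintype.card_pos
  cases ψ with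
  | state φ => exact trA_size A φ
  | neg ψ =>
      have := trAP_size A ψ
      simp only [trAP, SLsize, BSLsizeP]; nlinarith
  | or ψ ψ' =>
      have := trAP_size A ψ
      have := trAP_size A ψ'
      simp only [trAP, SLsize, BSLsizeP]; nlinarith
  | next ψ =>
      have := trAP_size A ψ
      simp only [trAP, SLsize, BSLsizeP]; nlinarith
  | untl ψ ψ' =>
      have := trAP_size A ψ
      have := trAP_size A ψ'
      simp only [trAP, SLsize, BSLsizeP]; nlinarith
termination_by sizeOf ψ
end

/-- `tr : SL → BSL` has linear size, and
`|tr_A(φ)| ≤ 2·|Ag|·|φ|` for every BSL state formula `φ` and every `A ⊆ Ag`. -/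
theorem statement_10 [DecidableEq Ag] [Fintype Ag] [Nonempty Ag] :
    (∃ c : ℕ, ∀ φ : SLForm AP Ag Var, BSLsize (tr φ) ≤ c * SLsize φ) ∧
      (∀ (A : Finset Ag) (φ : BSLForm AP Ag (Var ⊕ Ag)),
        SLsize (trA A φ) ≤ 2 * Fintype.card Ag * BSLsize φ) := by
  exact ⟨⟨2, tr_size_le⟩, trA_size⟩
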